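/- Let N ≥ 2 and consider the free abelian group ℤ^N with standard basis e₁,…,e_N. Let m and r be positive integers with gcd(m,r) = 1. Let ℓ = m·e₁, and let h = a₁e₁ + a₂e₂ + … + a_N e_N be a primitive vector (i.e. gcd(a₁,…,a_N) = 1) such that aᵢ ≠ 0 for at least one index i ≥ 2. Set γ := gcd(a₂,…,a_N) and assume gcd(m,γ) = 1. Then the set of natural numbers y such that ℓ + (r·y)·h is primitive in ℤ^N is infinite. -/

import Mathlib

/-!
Write `c = r·y`. The first coordinate `m + c·a₁` of `ℓ + c·h` is coprime to `c` when `m` is,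
hence coprime to `γ` when `γ ∣ c`; the other coordinates are the `c·aᵢ`, whose gcd is `|c|·γ`.
So `ℓ + c·h` is primitive as soon as `γ ∣ y` and `gcd(m, y) = 1`, which holds for the
infinitely many `y = |γ|·(t·|m| + 1)`.
-/

open Finset

theorem Int.gcd_single_add_mul_eq_one {ι : Type*} [Fintype ι] [DecidableEq ι] (i₀ : ι)
    {m c : ℤ} (a : ι → ℤ) (hmc : IsCoprime m c) (hc : (univ.erase i₀).gcd a ∣ c) :
    univ.gcd (fun i => (Pi.single i₀ m : ι → ℤ) i + c * a i) = 1 := by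
  have hrest : (univ.erase i₀).gcd (fun i => (Pi.single i₀ m : ι → ℤ) i + c * a i)
      = normalize c * (univ.erase i₀).gcd a := by
    rw [← Finset.gcd_mul_left]
    exact gcd_congr rfl fun i hi => by simp [ne_of_mem_erase hi]
  have hcop : IsCoprime (m + c * a i₀) (normalize c * (univ.erase i₀).gcd a) := by
    have h := hmc.add_mul_left_left (a i₀)
    refine IsCoprime.mul_right ?_ (h.of_isCoprime_of_dvd_right hc)
    exact h.of_isCoprime_of_dvd_right (normalize_associated c).dvd
  rw [← insert_erase (mem_univ i₀), gcd_insert, hrest, Pi.single_eq_same, ← Int.coe_gcd,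
    Int.isCoprime_iff_gcd_eq_one.mp hcop, Nat.cast_one]

theorem Nat.setOf_dvd_and_coprime_infinite {g n : ℕ} (hg : g ≠ 0) (hn : n ≠ 0)
    (hng : n.Coprime g) : {y : ℕ | g ∣ y ∧ n.Coprime y}.Infinite := by
  refine Set.infinite_of_injective_forall_mem (f := fun t => g * (t * n + 1)) ?_ fun t => ?_
  · intro s t hst
    simpa [hg, hn] using hst
  · exact ⟨dvd_mul_right g _,
      hng.mul_right ((coprime_mul_right_add_right n 1 t).mpr (coprime_one_right n))⟩

theorem infinite_primitive_translates_general
    (N : ℕ) (m r : ℤ) (hm : 0 < m)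
    (hmr : Int.gcd m r = 1)
    (a : Fin N → ℤ)
    (hex : ∃ i : Fin N, 0 < i.val ∧ a i ≠ 0)
    (γ : ℤ)
    (hγ : γ = (Finset.univ.filter fun i : Fin N => 0 < i.val).gcd a)
    (hmγ : Int.gcd m γ = 1) :
    {y : ℕ |
      Finset.univ.gcd
        (fun i : Fin N => (if i.val = 0 then m else 0) + r * (y : ℤ) * a i) = 1}.Infinite := by
  obtain ⟨i₁, hi₁, ha₁⟩ := hex
  let i₀ : Fin N := ⟨0, hi₁.trans i₁.isLt⟩
  have hγ_erase : γ = (univ.erase i₀).gcd a := by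
    rw [hγ]
    congr 1
    ext i
    simp [i₀, Fin.ext_iff, Nat.pos_iff_ne_zero]
  have hγ0 : γ.natAbs ≠ 0 := by
    rw [Int.natAbs_ne_zero, hγ]
    exact fun h => ha₁ (gcd_eq_zero_iff.mp h i₁ (by simpa using hi₁))
  refine (Nat.setOf_dvd_and_coprime_infinite hγ0 (Int.natAbs_ne_zero.mpr hm.ne') hmγ).mono ?_
  rintro y ⟨hγy, hmy⟩
  have hmy_int : IsCoprime m y := by rwa [Int.isCoprime_iff_gcd_eq_one, Int.gcd, Int.natAbs_natCast]
  have hprimitive := Int.gcd_single_add_mul_eq_one i₀ a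
    ((Int.isCoprime_iff_gcd_eq_one.mpr hmr).mul_right hmy_int)
    (hγ_erase ▸ (Int.dvd_natCast.mpr hγy).mul_left r)
  convert hprimitive using 3 with i
  simp [Pi.single_apply, i₀, Fin.ext_iff, mul_assoc]

/-- Conclusion of Lemma `cambiopol` in lattice-theoretic form: in `ℤ^N` (N ≥ 2), with
`ℓ = m·e₁`, `h = (a₁,…,a_N)` primitive with some `aᵢ ≠ 0` for `i ≥ 2`,
`γ = gcd(a₂,…,a_N)`, `gcd(m,r) = 1` and `gcd(m,γ) = 1`, the set of natural numbers `y`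
such that `ℓ + (r·y)·h` is primitive is infinite. Vectors are `Fin N → ℤ` (0-indexed,
so `e₁` is index `0` and "indices `i ≥ 2`" are those with `0 < i.val`); primitivity
means the gcd of all coordinates is `1`. -/
theorem infinite_primitive_translates
    (N : ℕ) (hN : 2 ≤ N) (m r : ℤ) (hm : 0 < m) (hr : 0 < r)
    (hmr : Int.gcd m r = 1)
    (a : Fin N → ℤ)
    (hprim : Finset.univ.gcd a = 1)
    (hex : ∃ i : Fin N, 0 < i.val ∧ a i ≠ 0)
    (γ : ℤ)
    (hγ : γ = (Finset.univ.filter fun i : Fin N => 0 < i.val).gcd a)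
    (hmγ : Int.gcd m γ = 1) :
    {y : ℕ |
      Finset.univ.gcd
        (fun i : Fin N => (if i.val = 0 then m else 0) + r * (y : ℤ) * a i) = 1}.Infinite :=
  infinite_primitive_translates_general N m r hm hmr a hex γ hγ hmγ
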